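/- I_b^{(∞)} is subadditive under tensor products: I_b^{(∞)}(ρ_{AB} ⊗ σ_{A'B'}) ≤ I_b^{(∞)}(ρ_{AB}) + I_b^{(∞)}(σ_{A'B'}), where the bipartite cut is AA' : BB'. -/

import Mathlib

/-! Given broadcast copies `τ₁` of `ρ` and `τ₂` of `σ`, reshuffling the tensor product `τ₁ ⊗ τ₂`
into `n` copies of the joint system `(AA', BB')` gives a broadcast copy of `ρ ⊗ σ` whose mutual
information is `I(τ₁) + I(τ₂)`, since the von Neumann entropy is additive on tensor products of
states. Taking infima gives `(I_b)_n(ρ ⊗ σ) ≤ (I_b)_n(ρ) + (I_b)_n(σ)`; the infima are finite because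
the product state `ρ^{⊗n}` is a broadcast copy and mutual information is bounded below. Dividing by
`n` and passing to the limit gives the claim. -/

open scoped BigOperators Kronecker ComplexOrder
open Matrix Filter Topology

noncomputable section

/-- Shannon entropy (log base 2) of a finitely supported distribution. -/
def shannon {I : Type} [Fintype I] (p : I → ℝ) : ℝ := -∑ i, p i * Real.logb 2 (p i)

/-- `p` is a probability distribution. -/
def IsProbDist {I : Type} [Fintype I] (p : I → ℝ) : Prop :=
  (∀ i, 0 ≤ p i) ∧ ∑ i, p i = 1

/-- First marginal of a joint distribution. -/
def margA {I J : Type} [Fintype J] (p : I × J → ℝ) : I → ℝ := fun i => ∑ j, p (i, j)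

/-- Second marginal of a joint distribution. -/
def margB {I J : Type} [Fintype I] (p : I × J → ℝ) : J → ℝ := fun j => ∑ i, p (i, j)

/-- Classical mutual information of a joint distribution. -/
def classMI {I J : Type} [Fintype I] [Fintype J] (p : I × J → ℝ) : ℝ :=
  shannon (margA p) + shannon (margB p) - shannon p

/-- Kullback-Leibler divergence (log base 2). -/
def klDiv {I : Type} [Fintype I] (p q : I → ℝ) : ℝ := ∑ i, p i * Real.logb 2 (p i / q i)

/-- A density operator: positive semidefinite with unit trace. -/
def IsDensity {n : Type} [Fintype n] (ρ : Matrix n n ℂ) : Prop :=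
  ρ.PosSemidef ∧ ρ.trace = 1

/-- Von Neumann entropy (log base 2) via the eigenvalues of a Hermitian matrix. -/
def vnEntropy {n : Type} [Fintype n] [DecidableEq n] (ρ : Matrix n n ℂ) : ℝ :=
  if h : ρ.IsHermitian then -∑ i, h.eigenvalues i * Real.logb 2 (h.eigenvalues i) else 0

/-- Partial trace over the second tensor factor. -/
def ptraceB {A B : Type} [Fintype B] (ρ : Matrix (A × B) (A × B) ℂ) : Matrix A A ℂ :=
  Matrix.of fun a a' => ∑ b, ρ (a, b) (a', b)

/-- Partial trace over the first tensor factor. -/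
def ptraceA {A B : Type} [Fintype A] (ρ : Matrix (A × B) (A × B) ℂ) : Matrix B B ℂ :=
  Matrix.of fun b b' => ∑ a, ρ (a, b) (a, b')

/-- Quantum mutual information I(A:B) = S(ρ_A) + S(ρ_B) - S(ρ_{AB}). -/
def mutInfo {A B : Type} [Fintype A] [Fintype B] [DecidableEq A] [DecidableEq B]
    (ρ : Matrix (A × B) (A × B) ℂ) : ℝ :=
  vnEntropy (ptraceB ρ) + vnEntropy (ptraceA ρ) - vnEntropy ρ

/-- Tensor product of two bipartite states, with the cut (A₁A₂ : B₁B₂). -/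
def tens2 {A₁ B₁ A₂ B₂ : Type}
    (ρ : Matrix (A₁ × B₁) (A₁ × B₁) ℂ) (σ : Matrix (A₂ × B₂) (A₂ × B₂) ℂ) :
    Matrix ((A₁ × A₂) × (B₁ × B₂)) ((A₁ × A₂) × (B₁ × B₂)) ℂ :=
  Matrix.of fun x y => ρ (x.1.1, x.2.1) (y.1.1, y.2.1) * σ (x.1.2, x.2.2) (y.1.2, y.2.2)

/-- n-fold tensor power of a bipartite state, with the A^n : B^n cut. -/
def tpow {A B : Type} (σ : Matrix (A × B) (A × B) ℂ) (n : ℕ) :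
    Matrix ((Fin n → A) × (Fin n → B)) ((Fin n → A) × (Fin n → B)) ℂ :=
  Matrix.of fun x y => ∏ i, σ (x.1 i, x.2 i) (y.1 i, y.2 i)

/-- Reduced state of the k-th copy (partial trace over all other copies). -/
def copyMarginal {A B : Type} [Fintype A] [Fintype B] [DecidableEq A] [DecidableEq B] {n : ℕ}
    (ρ : Matrix ((Fin n → A) × (Fin n → B)) ((Fin n → A) × (Fin n → B)) ℂ) (k : Fin n) :
    Matrix (A × B) (A × B) ℂ :=
  Matrix.of fun x y => ∑ f : Fin n → A, ∑ g : Fin n → B,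
    if f k = x.1 ∧ g k = x.2 then
      ρ (f, g) (Function.update f k y.1, Function.update g k y.2) else 0

/-- `τ` is an n-copy broadcast state of `ρ`. -/
def IsBroadcast {A B : Type} [Fintype A] [Fintype B] [DecidableEq A] [DecidableEq B] (n : ℕ)
    (τ : Matrix ((Fin n → A) × (Fin n → B)) ((Fin n → A) × (Fin n → B)) ℂ)
    (ρ : Matrix (A × B) (A × B) ℂ) : Prop :=
  IsDensity τ ∧ ∀ k : Fin n, copyMarginal τ k = ρ

/-- n-copy broadcast mutual information (I_b)_n. -/
def Ib {A B : Type} [Fintype A] [Fintype B] [DecidableEq A] [DecidableEq B] (n : ℕ)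
    (ρ : Matrix (A × B) (A × B) ℂ) : ℝ :=
  sInf {x | ∃ τ, IsBroadcast n τ ρ ∧ x = mutInfo τ}

/-- Partial trace of a state on (A A' : B B') over the primed (ancilla) systems. -/
def ptracePrime {A B A' B' : Type} [Fintype A'] [Fintype B']
    (τ : Matrix ((A × A') × (B × B')) ((A × A') × (B × B')) ℂ) :
    Matrix (A × B) (A × B) ℂ :=
  Matrix.of fun x y => ∑ a', ∑ b', τ ((x.1, a'), (x.2, b')) ((y.1, a'), (y.2, b'))

/-- Partial trace of a state on (A A' : B B') over the unprimed systems. -/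
def ptraceMain {A B A' B' : Type} [Fintype A] [Fintype B]
    (τ : Matrix ((A × A') × (B × B')) ((A × A') × (B × B')) ℂ) :
    Matrix (A' × B') (A' × B') ℂ :=
  Matrix.of fun x y => ∑ a, ∑ b, τ ((a, x.1), (b, x.2)) ((a, y.1), (b, y.2))

/-- Conditional entanglement of mutual information (CEMI). -/
def EI {A B : Type} [Fintype A] [Fintype B] [DecidableEq A] [DecidableEq B]
    (ρ : Matrix (A × B) (A × B) ℂ) : ℝ :=
  (1 / 2) * sInf {x | ∃ (dA dB : ℕ)
    (τ : Matrix ((A × Fin dA) × (B × Fin dB)) ((A × Fin dA) × (B × Fin dB)) ℂ),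
    IsDensity τ ∧ ptracePrime τ = ρ ∧ x = mutInfo τ - mutInfo (ptraceMain τ)}

/-- Classical squashed entanglement, via the ensemble formula. -/
def EsqC {A B : Type} [Fintype A] [Fintype B] [DecidableEq A] [DecidableEq B]
    (ρ : Matrix (A × B) (A × B) ℂ) : ℝ :=
  (1 / 2) * sInf {x | ∃ (m : ℕ) (p : Fin m → ℝ) (σ : Fin m → Matrix (A × B) (A × B) ℂ),
    (∀ k, 0 ≤ p k) ∧ (∑ k, p k = 1) ∧ (∀ k, IsDensity (σ k)) ∧
    (∑ k, (p k : ℂ) • σ k = ρ) ∧ x = ∑ k, p k * mutInfo (σ k)}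

/-- Separability of a bipartite state. -/
def Separable {A B : Type} [Fintype A] [Fintype B]
    (ρ : Matrix (A × B) (A × B) ℂ) : Prop :=
  ∃ (m : ℕ) (p : Fin m → ℝ) (σA : Fin m → Matrix A A ℂ) (σB : Fin m → Matrix B B ℂ),
    (∀ k, 0 ≤ p k) ∧ (∑ k, p k = 1) ∧ (∀ k, IsDensity (σA k) ∧ IsDensity (σB k)) ∧
    ρ = ∑ k, (p k : ℂ) • (σA k ⊗ₖ σB k)

/-- A finite POVM. -/
def IsPOVM {A ι : Type} [Fintype A] [Fintype ι] [DecidableEq A]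
    (M : ι → Matrix A A ℂ) : Prop :=
  (∀ i, (M i).PosSemidef) ∧ ∑ i, M i = 1

/-- Outcome distribution of a local product measurement. -/
def measProb {A B ι κ : Type} [Fintype A] [Fintype B]
    (M : ι → Matrix A A ℂ) (N : κ → Matrix B B ℂ)
    (ρ : Matrix (A × B) (A × B) ℂ) : ι × κ → ℝ :=
  fun x => (((M x.1 ⊗ₖ N x.2) * ρ).trace).re

/-- Completeness condition for a family of Kraus operators. -/
def IsKraus {A A' ι : Type} [Fintype A] [Fintype A'] [Fintype ι] [DecidableEq A]
    (K : ι → Matrix A' A ℂ) : Prop :=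
  ∑ i, (K i)ᴴ * K i = 1

/-- Action of the product channel Λ_A ⊗ Λ_B (given by Kraus operators) on a bipartite state. -/
def localApply {A B A' B' ι κ : Type} [Fintype A] [Fintype B] [Fintype ι] [Fintype κ]
    (K : ι → Matrix A' A ℂ) (L : κ → Matrix B' B ℂ)
    (ρ : Matrix (A × B) (A × B) ℂ) : Matrix (A' × B') (A' × B') ℂ :=
  ∑ i, ∑ j, (K i ⊗ₖ L j) * ρ * (K i ⊗ₖ L j)ᴴ

/-- Measured relative entropy distance to separable states (with optimization over local POVMs). -/
def measREE {A B : Type} [Fintype A] [Fintype B] [DecidableEq A] [DecidableEq B]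
    (ρ : Matrix (A × B) (A × B) ℂ) : ℝ :=
  sInf {x | ∃ σ : Matrix (A × B) (A × B) ℂ, IsDensity σ ∧ Separable σ ∧
    x = sSup {y | ∃ (m m' : ℕ) (M : Fin m → Matrix A A ℂ) (N : Fin m' → Matrix B B ℂ),
      IsPOVM M ∧ IsPOVM N ∧ y = klDiv (measProb M N ρ) (measProb M N σ)}}


open Polynomial Real

section Spectrum

variable {n m : Type} [Fintype n] [DecidableEq n] [Fintype m] [DecidableEq m]

lemma roots_prod_X_sub_C_univ {ι : Type} [Fintype ι] (c : ι → ℂ) :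
    (∏ i, (X - C (c i))).roots = Finset.univ.val.map c := by
  rw [Finset.prod_eq_multiset_prod, ← roots_multiset_prod_X_sub_C (Finset.univ.val.map c),
    Multiset.map_map]
  rfl

lemma charpoly_unitary_mul_mul_star {U : Matrix n n ℂ} (hU : U ∈ unitary (Matrix n n ℂ))
    (M : Matrix n n ℂ) : (U * M * star U).charpoly = M.charpoly := by
  rw [charpoly_mul_comm, ← mul_assoc, Unitary.star_mul_self_of_mem hU, one_mul]

lemma Matrix.IsHermitian.charpoly_kronecker {A : Matrix n n ℂ} {B : Matrix m m ℂ}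
    (hA : A.IsHermitian) (hB : B.IsHermitian) :
    (A ⊗ₖ B).charpoly =
      ∏ p : n × m, (X - C ((hA.eigenvalues p.1 * hB.eigenvalues p.2 : ℝ) : ℂ)) := by
  set U : Matrix n n ℂ := (hA.eigenvectorUnitary : Matrix n n ℂ)
  set V : Matrix m m ℂ := (hB.eigenvectorUnitary : Matrix m m ℂ)
  have hdiag : A ⊗ₖ B = (U ⊗ₖ V) * diagonal
      (fun p : n × m => ((hA.eigenvalues p.1 * hB.eigenvalues p.2 : ℝ) : ℂ)) * star (U ⊗ₖ V) := by
    conv_lhs => rw [hA.spectral_theorem, hB.spectral_theorem]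
    simp [mul_kronecker_mul, diagonal_kronecker_diagonal, star_eq_conjTranspose,
      conjTranspose_kronecker, U, V]
  rw [hdiag, charpoly_unitary_mul_mul_star
    (kronecker_mem_unitary hA.eigenvectorUnitary.2 hB.eigenvectorUnitary.2), charpoly_diagonal]

open scoped MatrixOrder in
lemma Matrix.PosSemidef.exists_eq_conjTranspose_mul_self {M : Matrix n n ℂ} (hM : M.PosSemidef) :
    ∃ P : Matrix n n ℂ, M = Pᴴ * P := by
  obtain ⟨P, rfl⟩ := CStarAlgebra.nonneg_iff_eq_star_mul_self.mp hM.nonneg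
  exact ⟨P, rfl⟩

end Spectrum

section Entropy

variable {n m : Type} [Fintype n] [DecidableEq n] [Fintype m] [DecidableEq m]

lemma vnEntropy_eq_of_charpoly_eq_prod {M : Matrix n n ℂ} (hM : M.IsHermitian) {ι : Type}
    [Fintype ι] (d : ι → ℝ) (h : M.charpoly = ∏ i, (X - C (d i : ℂ))) :
    vnEntropy M = (∑ i, negMulLog (d i)) / log 2 := by
  have hroots := congrArg Polynomial.roots (hM.charpoly_eq.symm.trans h)
  rw [roots_prod_X_sub_C_univ, roots_prod_X_sub_C_univ] at hroots
  have hsum := congrArg (fun s => (s.map fun z : ℂ => negMulLog z.re).sum) hroots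
  simp only [Multiset.map_map, Function.comp_def, RCLike.ofReal_eq_complex_ofReal,
    Complex.ofReal_re, ← Finset.sum_eq_multiset_sum] at hsum
  rw [vnEntropy, dif_pos hM, ← hsum, Finset.sum_div, ← Finset.sum_neg_distrib]
  refine Finset.sum_congr rfl fun i _ => ?_
  simp only [negMulLog, logb]
  ring

lemma vnEntropy_eq_sum_negMulLog {M : Matrix n n ℂ} (hM : M.IsHermitian) :
    vnEntropy M = (∑ i, negMulLog (hM.eigenvalues i)) / log 2 :=
  vnEntropy_eq_of_charpoly_eq_prod hM _ hM.charpoly_eq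

lemma vnEntropy_submatrix_equiv {M : Matrix n n ℂ} (hM : M.IsHermitian) (e : m ≃ n) :
    vnEntropy (M.submatrix e e) = vnEntropy M := by
  rw [vnEntropy_eq_of_charpoly_eq_prod (hM.submatrix e) _
      ((charpoly_reindex e.symm M).trans hM.charpoly_eq),
    vnEntropy_eq_sum_negMulLog hM]
  rfl

lemma IsDensity.sum_eigenvalues {ρ : Matrix n n ℂ} (hρ : IsDensity ρ) :
    ∑ i, hρ.1.1.eigenvalues i = 1 := by
  have h := hρ.2.symm.trans hρ.1.1.trace_eq_sum_eigenvalues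
  simpa using congrArg Complex.re h.symm

lemma IsDensity.eigenvalues_le_one {ρ : Matrix n n ℂ} (hρ : IsDensity ρ) (i : n) :
    hρ.1.1.eigenvalues i ≤ 1 :=
  hρ.sum_eigenvalues ▸
    Finset.single_le_sum (fun j _ => hρ.1.eigenvalues_nonneg j) (Finset.mem_univ i)

lemma IsDensity.vnEntropy_nonneg {ρ : Matrix n n ℂ} (hρ : IsDensity ρ) : 0 ≤ vnEntropy ρ := by
  rw [vnEntropy_eq_sum_negMulLog hρ.1.1]
  exact div_nonneg (Finset.sum_nonneg fun i _ =>
    negMulLog_nonneg (hρ.1.eigenvalues_nonneg i) (hρ.eigenvalues_le_one i)) (log_nonneg one_le_two)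

lemma Matrix.PosSemidef.vnEntropy_le {M : Matrix n n ℂ} (hM : M.PosSemidef) :
    vnEntropy M ≤ Fintype.card n / log 2 := by
  rw [vnEntropy_eq_sum_negMulLog hM.1]
  gcongr
  calc ∑ i, negMulLog (hM.1.eigenvalues i) ≤ ∑ _i : n, (1 : ℝ) :=
        Finset.sum_le_sum fun i _ => (negMulLog_le_one_sub_self (hM.eigenvalues_nonneg i)).trans
          (by linarith [hM.eigenvalues_nonneg i])
    _ = Fintype.card n := by simp

lemma vnEntropy_kronecker {ρ : Matrix n n ℂ} {σ : Matrix m m ℂ} (hρ : IsDensity ρ)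
    (hσ : IsDensity σ) : vnEntropy (ρ ⊗ₖ σ) = vnEntropy ρ + vnEntropy σ := by
  rw [vnEntropy_eq_of_charpoly_eq_prod (hρ.1.kronecker hσ.1).1 _
      (hρ.1.1.charpoly_kronecker hσ.1.1),
    vnEntropy_eq_sum_negMulLog hρ.1.1, vnEntropy_eq_sum_negMulLog hσ.1.1, ← add_div,
    Fintype.sum_prod_type]
  simp only [negMulLog_mul, Finset.sum_add_distrib, ← Finset.sum_mul, ← Finset.mul_sum,
    hρ.sum_eigenvalues, hσ.sum_eigenvalues, one_mul]

end Entropy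

section PartialTrace

variable {A B : Type}

lemma ptraceB_eq_sum_submatrix [Fintype B] (M : Matrix (A × B) (A × B) ℂ) :
    ptraceB M = ∑ b, M.submatrix (·, b) (·, b) := by
  ext a a'
  simp [ptraceB, Matrix.sum_apply]

lemma ptraceA_eq_sum_submatrix [Fintype A] (M : Matrix (A × B) (A × B) ℂ) :
    ptraceA M = ∑ a, M.submatrix (a, ·) (a, ·) := by
  ext b b'
  simp [ptraceA, Matrix.sum_apply]

lemma trace_ptraceB [Fintype A] [Fintype B] (M : Matrix (A × B) (A × B) ℂ) :
    (ptraceB M).trace = M.trace := by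
  simp [trace, ptraceB, Fintype.sum_prod_type]

lemma trace_ptraceA [Fintype A] [Fintype B] (M : Matrix (A × B) (A × B) ℂ) :
    (ptraceA M).trace = M.trace := by
  simp [trace, ptraceA, Fintype.sum_prod_type_right]

lemma IsDensity.ptraceB [Fintype A] [Fintype B] {M : Matrix (A × B) (A × B) ℂ}
    (hM : IsDensity M) : IsDensity (ptraceB M) := by
  refine ⟨?_, (trace_ptraceB M).trans hM.2⟩
  rw [ptraceB_eq_sum_submatrix]
  exact posSemidef_sum _ fun b _ => hM.1.submatrix _

lemma IsDensity.ptraceA [Fintype A] [Fintype B] {M : Matrix (A × B) (A × B) ℂ}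
    (hM : IsDensity M) : IsDensity (ptraceA M) := by
  refine ⟨?_, (trace_ptraceA M).trans hM.2⟩
  rw [ptraceA_eq_sum_submatrix]
  exact posSemidef_sum _ fun a _ => hM.1.submatrix _

lemma ptraceB_submatrix_prodMap {A' B' : Type} [Fintype B] [Fintype B'] (eA : A' → A)
    (eB : B' ≃ B) (M : Matrix (A × B) (A × B) ℂ) :
    ptraceB (M.submatrix (Prod.map eA eB) (Prod.map eA eB)) = (ptraceB M).submatrix eA eA := by
  ext a a'
  exact eB.sum_comp fun b => M (eA a, b) (eA a', b)

lemma ptraceA_submatrix_prodMap {A' B' : Type} [Fintype A] [Fintype A'] (eA : A' ≃ A)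
    (eB : B' → B) (M : Matrix (A × B) (A × B) ℂ) :
    ptraceA (M.submatrix (Prod.map eA eB) (Prod.map eA eB)) = (ptraceA M).submatrix eB eB := by
  ext b b'
  exact eA.sum_comp fun a => M (a, eB b) (a, eB b')

lemma ptraceB_tens2 {A' B' : Type} [Fintype B] [Fintype B'] (ρ : Matrix (A × B) (A × B) ℂ)
    (σ : Matrix (A' × B') (A' × B') ℂ) : ptraceB (tens2 ρ σ) = ptraceB ρ ⊗ₖ ptraceB σ := by
  ext a a'
  simp [ptraceB, tens2, Fintype.sum_prod_type, Finset.sum_mul_sum]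

lemma ptraceA_tens2 {A' B' : Type} [Fintype A] [Fintype A'] (ρ : Matrix (A × B) (A × B) ℂ)
    (σ : Matrix (A' × B') (A' × B') ℂ) : ptraceA (tens2 ρ σ) = ptraceA ρ ⊗ₖ ptraceA σ := by
  ext b b'
  simp [ptraceA, tens2, Fintype.sum_prod_type, Finset.sum_mul_sum]

end PartialTrace

lemma tens2_eq_submatrix_kronecker {A B A' B' : Type} (ρ : Matrix (A × B) (A × B) ℂ)
    (σ : Matrix (A' × B') (A' × B') ℂ) :
    tens2 ρ σ = (ρ ⊗ₖ σ).submatrix (Equiv.prodProdProdComm A A' B B')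
      (Equiv.prodProdProdComm A A' B B') :=
  rfl

lemma IsDensity.submatrix_equiv {m n : Type} [Fintype m] [Fintype n] {M : Matrix n n ℂ}
    (hM : IsDensity M) (e : m ≃ n) : IsDensity (M.submatrix e e) :=
  ⟨hM.1.submatrix e, (e.sum_comp fun i => M i i).trans hM.2⟩

lemma IsDensity.kronecker {m n : Type} [Fintype m] [Fintype n] [DecidableEq m] [DecidableEq n]
    {M : Matrix m m ℂ} {N : Matrix n n ℂ} (hM : IsDensity M) (hN : IsDensity N) :
    IsDensity (M ⊗ₖ N) :=
  ⟨hM.1.kronecker hN.1, by rw [trace_kronecker, hM.2, hN.2, mul_one]⟩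

section MutualInformation

variable {A B A' B' : Type} [Fintype A] [Fintype B] [DecidableEq A] [DecidableEq B]
  [Fintype A'] [Fintype B'] [DecidableEq A'] [DecidableEq B']

lemma IsDensity.tens2 {ρ : Matrix (A × B) (A × B) ℂ} {σ : Matrix (A' × B') (A' × B') ℂ}
    (hρ : IsDensity ρ) (hσ : IsDensity σ) : IsDensity (tens2 ρ σ) :=
  (hρ.kronecker hσ).submatrix_equiv (Equiv.prodProdProdComm A A' B B')

lemma mutInfo_submatrix_prodMap {ρ : Matrix (A × B) (A × B) ℂ} (hρ : IsDensity ρ)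
    (eA : A' ≃ A) (eB : B' ≃ B) :
    mutInfo (ρ.submatrix (Prod.map eA eB) (Prod.map eA eB)) = mutInfo ρ := by
  rw [mutInfo, mutInfo, ptraceB_submatrix_prodMap, ptraceA_submatrix_prodMap,
    vnEntropy_submatrix_equiv hρ.ptraceB.1.1, vnEntropy_submatrix_equiv hρ.ptraceA.1.1]
  exact congrArg _ (vnEntropy_submatrix_equiv hρ.1.1 (eA.prodCongr eB))

lemma mutInfo_tens2 {ρ : Matrix (A × B) (A × B) ℂ} {σ : Matrix (A' × B') (A' × B') ℂ}
    (hρ : IsDensity ρ) (hσ : IsDensity σ) :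
    mutInfo (tens2 ρ σ) = mutInfo ρ + mutInfo σ := by
  rw [mutInfo, ptraceB_tens2, ptraceA_tens2, vnEntropy_kronecker hρ.ptraceB hσ.ptraceB,
    vnEntropy_kronecker hρ.ptraceA hσ.ptraceA, tens2_eq_submatrix_kronecker,
    vnEntropy_submatrix_equiv (hρ.1.kronecker hσ.1).1, vnEntropy_kronecker hρ hσ, mutInfo,
    mutInfo]
  ring

lemma IsDensity.neg_le_mutInfo {ρ : Matrix (A × B) (A × B) ℂ} (hρ : IsDensity ρ) :
    -(Fintype.card (A × B) / log 2) ≤ mutInfo ρ := by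
  have := hρ.1.vnEntropy_le
  have := hρ.ptraceB.vnEntropy_nonneg
  have := hρ.ptraceA.vnEntropy_nonneg
  rw [mutInfo]
  linarith

end MutualInformation

section TensorPower

variable {A B : Type} [Fintype A] [Fintype B]

lemma sum_prod_pair_eq_prod_sum {ι R : Type} [Fintype ι] [DecidableEq ι] [CommSemiring R]
    (F : ι → A × B → R) :
    ∑ z : (ι → A) × (ι → B), ∏ i, F i (z.1 i, z.2 i) = ∏ i, ∑ p, F i p := by
  rw [← (Equiv.arrowProdEquivProdArrow ι (fun _ => A) (fun _ => B)).sum_comp, Fintype.prod_sum]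
  rfl

lemma trace_tpow (ρ : Matrix (A × B) (A × B) ℂ) (n : ℕ) : (tpow ρ n).trace = ρ.trace ^ n := by
  rw [trace, trace, ← Fin.prod_const, ← sum_prod_pair_eq_prod_sum]
  rfl

lemma tpow_conjTranspose_mul_self (P : Matrix (A × B) (A × B) ℂ) (n : ℕ) :
    tpow (Pᴴ * P) n = (tpow P n)ᴴ * tpow P n := by
  ext x y
  simp only [tpow, of_apply, mul_apply, conjTranspose_apply, star_prod,
    ← Finset.prod_mul_distrib]
  exact (sum_prod_pair_eq_prod_sum fun i p => star (P p (x.1 i, x.2 i)) * P p (y.1 i, y.2 i)).symm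

variable [DecidableEq A] [DecidableEq B]

lemma IsDensity.tpow {ρ : Matrix (A × B) (A × B) ℂ} (hρ : IsDensity ρ) (n : ℕ) :
    IsDensity (tpow ρ n) := by
  refine ⟨?_, by rw [trace_tpow, hρ.2, one_pow]⟩
  obtain ⟨P, rfl⟩ := hρ.1.exists_eq_conjTranspose_mul_self
  rw [tpow_conjTranspose_mul_self]
  exact posSemidef_conjTranspose_mul_self _

lemma copyMarginal_tpow {ρ : Matrix (A × B) (A × B) ℂ} (hρ : ρ.trace = 1) {n : ℕ} (k : Fin n) :
    copyMarginal (tpow ρ n) k = ρ := by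
  ext x y
  -- `F` absorbs the constraint on the `k`-th copy, so that the sum factorizes over the copies
  let F : Fin n → A × B → ℂ := fun i p => if i = k then (if p = x then ρ x y else 0) else ρ p p
  have hF : ∀ f g, (if f k = x.1 ∧ g k = x.2 then
      tpow ρ n (f, g) (Function.update f k y.1, Function.update g k y.2) else 0)
      = ∏ i, F i (f i, g i) := by
    intro f g
    rw [Fintype.prod_eq_mul_prod_compl k]
    simp only [tpow, of_apply]
    rw [Fintype.prod_eq_mul_prod_compl k]
    simp only [F, Prod.ext_iff, if_pos, Function.update_self]
    split_ifs with h
    · rw [show (f k, g k) = x from Prod.ext h.1 h.2]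
      refine congrArg _ (Finset.prod_congr rfl fun i hi => ?_)
      have hik : i ≠ k := by simpa using hi
      simp [hik]
    · rw [zero_mul]
  calc copyMarginal (tpow ρ n) k x y
      = ∑ z : (Fin n → A) × (Fin n → B), ∏ i, F i (z.1 i, z.2 i) := by
        simp only [copyMarginal, of_apply, hF, Fintype.sum_prod_type]
    _ = ∏ i, ∑ p, F i p := sum_prod_pair_eq_prod_sum F
    _ = ρ x y := by simp [F, show ∑ p, ρ p p = 1 from hρ]

lemma IsBroadcast.tpow {ρ : Matrix (A × B) (A × B) ℂ} (hρ : IsDensity ρ) (n : ℕ) :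
    IsBroadcast n (tpow ρ n) ρ :=
  ⟨hρ.tpow n, copyMarginal_tpow hρ.2⟩

end TensorPower

section BroadcastProduct

lemma arrowProdEquivProdArrow_update_symm {ι α β : Type} [DecidableEq ι] (f : ι → α)
    (g : ι → β) (k : ι) (p : α × β) :
    Equiv.arrowProdEquivProdArrow ι (fun _ => α) (fun _ => β)
        (Function.update ((Equiv.arrowProdEquivProdArrow ι _ _).symm (f, g)) k p) =
      (Function.update f k p.1, Function.update g k p.2) := by
  simp only [Equiv.arrowProdEquivProdArrow_apply, ← Function.comp_def, Function.comp_update]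
  rfl

variable {A B A' B' : Type} [Fintype A] [Fintype B] [DecidableEq A] [DecidableEq B]
  [Fintype A'] [Fintype B'] [DecidableEq A'] [DecidableEq B']

/-- `τ₁ ⊗ τ₂`, regrouped as `n` copies of the system `(A × A', B × B')`. -/
def tensCopies {n : ℕ}
    (τ₁ : Matrix ((Fin n → A) × (Fin n → B)) ((Fin n → A) × (Fin n → B)) ℂ)
    (τ₂ : Matrix ((Fin n → A') × (Fin n → B')) ((Fin n → A') × (Fin n → B')) ℂ) :
    Matrix ((Fin n → A × A') × (Fin n → B × B')) ((Fin n → A × A') × (Fin n → B × B')) ℂ :=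
  (tens2 τ₁ τ₂).submatrix
    (Prod.map (Equiv.arrowProdEquivProdArrow _ _ _) (Equiv.arrowProdEquivProdArrow _ _ _))
    (Prod.map (Equiv.arrowProdEquivProdArrow _ _ _) (Equiv.arrowProdEquivProdArrow _ _ _))

lemma copyMarginal_tensCopies {n : ℕ}
    (τ₁ : Matrix ((Fin n → A) × (Fin n → B)) ((Fin n → A) × (Fin n → B)) ℂ)
    (τ₂ : Matrix ((Fin n → A') × (Fin n → B')) ((Fin n → A') × (Fin n → B')) ℂ) (k : Fin n) :
    copyMarginal (tensCopies τ₁ τ₂) k = tens2 (copyMarginal τ₁ k) (copyMarginal τ₂ k) := by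
  ext x y
  let e := (Equiv.prodCongr (Equiv.arrowProdEquivProdArrow (Fin n) (fun _ => A) (fun _ => A'))
    (Equiv.arrowProdEquivProdArrow (Fin n) (fun _ => B) (fun _ => B'))).trans
    (Equiv.prodProdProdComm _ _ _ _)
  simp only [copyMarginal, tens2, of_apply, Finset.sum_mul_sum, ← Fintype.sum_prod_type']
  rw [← e.symm.sum_comp]
  refine Fintype.sum_congr _ _ fun ⟨⟨f₁, g₁⟩, f₂, g₂⟩ => ?_
  simp only [e, tensCopies, tens2, submatrix_apply, of_apply, Equiv.symm_trans_apply,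
    Equiv.prodCongr_symm, Equiv.prodCongr_apply, Equiv.prodProdProdComm_symm,
    Equiv.prodProdProdComm_apply, Prod.map_apply, arrowProdEquivProdArrow_update_symm,
    Equiv.apply_symm_apply, ite_zero_mul_ite_zero]
  refine if_congr ?_ rfl rfl
  simp only [Equiv.arrowProdEquivProdArrow_symm_apply, Prod.ext_iff]
  tauto

lemma IsBroadcast.tensCopies {n : ℕ}
    {τ₁ : Matrix ((Fin n → A) × (Fin n → B)) ((Fin n → A) × (Fin n → B)) ℂ}
    {τ₂ : Matrix ((Fin n → A') × (Fin n → B')) ((Fin n → A') × (Fin n → B')) ℂ}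
    {ρ : Matrix (A × B) (A × B) ℂ} {σ : Matrix (A' × B') (A' × B') ℂ}
    (h₁ : IsBroadcast n τ₁ ρ) (h₂ : IsBroadcast n τ₂ σ) :
    IsBroadcast n (tensCopies τ₁ τ₂) (tens2 ρ σ) :=
  ⟨(h₁.1.tens2 h₂.1).submatrix_equiv (Equiv.prodCongr (Equiv.arrowProdEquivProdArrow _ _ _)
      (Equiv.arrowProdEquivProdArrow _ _ _)),
    fun k => by rw [copyMarginal_tensCopies, h₁.2 k, h₂.2 k]⟩

lemma mutInfo_tensCopies {n : ℕ}
    {τ₁ : Matrix ((Fin n → A) × (Fin n → B)) ((Fin n → A) × (Fin n → B)) ℂ}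
    {τ₂ : Matrix ((Fin n → A') × (Fin n → B')) ((Fin n → A') × (Fin n → B')) ℂ}
    (h₁ : IsDensity τ₁) (h₂ : IsDensity τ₂) :
    mutInfo (tensCopies τ₁ τ₂) = mutInfo τ₁ + mutInfo τ₂ :=
  (mutInfo_submatrix_prodMap (h₁.tens2 h₂) _ _).trans (mutInfo_tens2 h₁ h₂)

end BroadcastProduct

section BroadcastMutualInformation

open scoped Pointwise

variable {A B A' B' : Type} [Fintype A] [Fintype B] [DecidableEq A] [DecidableEq B]
  [Fintype A'] [Fintype B'] [DecidableEq A'] [DecidableEq B']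

lemma bddBelow_broadcast_mutInfo (n : ℕ) (ρ : Matrix (A × B) (A × B) ℂ) :
    BddBelow {x | ∃ τ, IsBroadcast n τ ρ ∧ x = mutInfo τ} :=
  ⟨_, by rintro _ ⟨τ, hτ, rfl⟩; exact hτ.1.neg_le_mutInfo⟩

lemma IsDensity.nonempty_broadcast_mutInfo {ρ : Matrix (A × B) (A × B) ℂ} (hρ : IsDensity ρ)
    (n : ℕ) : {x | ∃ τ, IsBroadcast n τ ρ ∧ x = mutInfo τ}.Nonempty :=
  ⟨_, _, IsBroadcast.tpow hρ n, rfl⟩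

lemma Ib_tens2_le {ρ : Matrix (A × B) (A × B) ℂ} {σ : Matrix (A' × B') (A' × B') ℂ}
    (hρ : IsDensity ρ) (hσ : IsDensity σ) (n : ℕ) :
    Ib n (tens2 ρ σ) ≤ Ib n ρ + Ib n σ := by
  calc Ib n (tens2 ρ σ)
      ≤ sInf ({x | ∃ τ, IsBroadcast n τ ρ ∧ x = mutInfo τ} +
          {x | ∃ τ, IsBroadcast n τ σ ∧ x = mutInfo τ}) := by
        refine csInf_le_csInf (bddBelow_broadcast_mutInfo n _) ((hρ.nonempty_broadcast_mutInfo n).add (hσ.nonempty_broadcast_mutInfo n)) ?_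
        rintro _ ⟨_, ⟨τ₁, h₁, rfl⟩, _, ⟨τ₂, h₂, rfl⟩, rfl⟩
        exact ⟨tensCopies τ₁ τ₂, h₁.tensCopies h₂, (mutInfo_tensCopies h₁.1 h₂.1).symm⟩
    _ = Ib n ρ + Ib n σ :=
        csInf_add (hρ.nonempty_broadcast_mutInfo n) (bddBelow_broadcast_mutInfo n ρ)
          (hσ.nonempty_broadcast_mutInfo n) (bddBelow_broadcast_mutInfo n σ)

end BroadcastMutualInformation

/-- subadditivity of I_b^{(∞)} under tensor products, with the
cut AA' : BB', stated via the defining limits. -/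
theorem stmt_13 {A B A' B' : Type}
    [Fintype A] [Fintype B] [Fintype A'] [Fintype B']
    [DecidableEq A] [DecidableEq B] [DecidableEq A'] [DecidableEq B']
    (ρ : Matrix (A × B) (A × B) ℂ) (σ : Matrix (A' × B') (A' × B') ℂ)
    (hρ : IsDensity ρ) (hσ : IsDensity σ)
    (L₁ L₂ L : ℝ)
    (hL₁ : Tendsto (fun n : ℕ => Ib n ρ / n) atTop (nhds L₁))
    (hL₂ : Tendsto (fun n : ℕ => Ib n σ / n) atTop (nhds L₂))
    (hL : Tendsto (fun n : ℕ => Ib n (tens2 ρ σ) / n) atTop (nhds L)) :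
    L ≤ L₁ + L₂ := by
  refine le_of_tendsto_of_tendsto' hL (hL₁.add hL₂) fun n => ?_
  rw [← add_div]
  exact div_le_div_of_nonneg_right (Ib_tens2_le hρ hσ n) n.cast_nonneg
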